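/- arXiv:1207.6970 — 2 statements merged into one kernel-verified Lean document; each statement's English description precedes it below -/
import Mathlib

section
/- If two binary terms induce the same term operation on every commutative magma, then they have the same length (number of variable occurrences) and the same depth. -/
/-! Length and depth are both computed by evaluating a term in a commutative magma:
length in `(ℕ, +)` with every variable sent to `1`, depth in `(ℕ, fun a b => max a b + 1)`
with every variable sent to `0`. -/

inductive Term : Type
  | var : ℕ → Term
  | app : Term → Term → Term

namespace Term
def eval {M : Type} [Mul M] (σ : ℕ → M) : Term → M
  | var i => σ i
  | app t s => eval σ t * eval σ s

def varList : Term → List ℕ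
  | var i => [i]
  | app t s => varList t ++ varList s

def depth : Term → ℕ
  | var _ => 0
  | app t s => max (depth t) (depth s) + 1

def len : Term → ℕ
  | var _ => 1
  | app t s => len t + len s

def siz : Term → ℕ
  | var _ => 0
  | app t s => siz t + siz s + 1
end Term

structure MaxSucc where
  val : ℕ

namespace MaxSucc

instance : Mul MaxSucc := ⟨fun a b => ⟨max a.val b.val + 1⟩⟩

theorem mul_comm (a b : MaxSucc) : a * b = b * a :=
  congrArg (fun n => MaxSucc.mk (n + 1)) (max_comm a.val b.val)

end MaxSucc

namespace Term

open Multiplicative in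
theorem eval_const_ofAdd (k : ℕ) (t : Term) :
    t.eval (fun _ => ofAdd k) = ofAdd (t.len * k) := by
  induction t with
  | var _ => simp [eval, len]
  | app a b iha ihb => simp only [eval, len, iha, ihb, add_mul, ofAdd_add]

theorem eval_const_maxSucc (k : ℕ) (t : Term) :
    t.eval (fun _ => MaxSucc.mk k) = ⟨t.depth + k⟩ := by
  induction t with
  | var _ => simp [eval, depth]
  | app a b iha ihb =>
    simp only [eval, iha, ihb]
    show MaxSucc.mk (max (a.depth + k) (b.depth + k) + 1) = _
    exact congrArg MaxSucc.mk (by simp only [depth]; omega)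

end Term

/-- If two binary terms induce the same term operation on every commutative
magma, then they have the same length and the same depth. -/
theorem stmt_13 (t s : Term)
    (h : ∀ (M : Type) [Mul M], (∀ x y : M, x * y = y * x) →
      ∀ σ : ℕ → M, t.eval σ = s.eval σ) :
    t.len = s.len ∧ t.depth = s.depth := by
  have hlen := h (Multiplicative ℕ) mul_comm (fun _ => Multiplicative.ofAdd 1)
  have hdepth := h MaxSucc MaxSucc.mul_comm (fun _ => ⟨0⟩)
  rw [Term.eval_const_ofAdd, Term.eval_const_ofAdd] at hlen
  rw [Term.eval_const_maxSucc, Term.eval_const_maxSucc] at hdepth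
  exact ⟨by simpa using hlen, by simpa using hdepth⟩
end

section
/- The class of magmas satisfying (x·y)·z = y·z does not satisfy the implication used for stability: there exist terms t, s, r, u with t ≈ s valid in the class, r a subterm of both t and s (occurring essentially), such that replacing all minimal occurrences of subterms equivalent to r in t and in s by u produces terms that are not equivalent in the class. Concretely, with t = ((x₃·(x₁·x₂))·(x₂·(x₁·x₂))), s = (x₂·(x₂·(x₁·x₂))), r = x₁·x₂, u = x₃: t ≈ s holds in all such magmas, but ((x₃·x₃)·(x₂·x₃)) ≈ (x₂·(x₂·x₃)) fails in some such magma. -/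
/-! In the class, left multiplication by `x * y` is left multiplication by `y`, so
`(x₃ * r) * (x₂ * r) = r * (x₂ * r) = x₂ * (x₂ * r)` for `r = x₁ * x₂`: the second step
uses that `r` is itself a product ending in `x₂`. After replacing `r` by the variable `x₃`
this second step is lost, and a three-element magma separates the two sides. -/

theorem mul_mul_mul_self_eq_of_mul_mul {M : Type*} [Mul M]
    (h : ∀ x y z : M, (x * y) * z = y * z) (x₁ x₂ x₃ : M) :
    (x₃ * (x₁ * x₂)) * (x₂ * (x₁ * x₂)) = x₂ * (x₂ * (x₁ * x₂)) := by
  rw [h, h]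

inductive CounterMagma
  | zero
  | one
  | two
  deriving DecidableEq

namespace CounterMagma

instance : Mul CounterMagma where
  mul
    | _, zero => zero
    | two, one => one
    | _, one => zero
    | _, two => two

theorem mul_mul (x y z : CounterMagma) : (x * y) * z = y * z := by
  cases x <;> cases y <;> cases z <;> rfl

theorem mul_self_mul_ne : (one * one) * (two * one) ≠ two * (two * one) := by
  decide

end CounterMagma

/-- The class of magmas satisfying (x*y)*z = y*z witnesses failure of the
stability implication: t ≈ s holds in the class (with t, s, r, u as in the
paper), but the terms obtained by Σ-replacing r = x₁*x₂ by u = x₃ are not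
equivalent in the class. -/
theorem stmt_16 :
    (∀ (M : Type) [Mul M], (∀ x y z : M, (x * y) * z = y * z) →
      ∀ x₁ x₂ x₃ : M,
        (x₃ * (x₁ * x₂)) * (x₂ * (x₁ * x₂)) = x₂ * (x₂ * (x₁ * x₂))) ∧
    ¬ (∀ (M : Type) [Mul M], (∀ x y z : M, (x * y) * z = y * z) →
      ∀ x₂ x₃ : M,
        (x₃ * x₃) * (x₂ * x₃) = x₂ * (x₂ * x₃)) :=
  ⟨fun _ _ h => mul_mul_mul_self_eq_of_mul_mul h,
    fun h => CounterMagma.mul_self_mul_ne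
      (h CounterMagma CounterMagma.mul_mul CounterMagma.two CounterMagma.one)⟩
end
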